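/- Let C be a triangulated category with shift functor T and M a rigid full subcategory (Hom_C(M, TM') = 0 for all M, M' ∈ M). Then (T⁻¹M ∗ M)/M ≃ mod M, where T⁻¹M ∗ M is the full subcategory of objects X fitting in a triangle T⁻¹M1 → X → M0 → M1 with M0, M1 ∈ M. -/

import Mathlib

/-!
The equivalence is induced by `X ↦ Hom(−, X⟦1⟧)|𝓜`. Rotating a triangle
`T⁻¹M₁ → X → M₀ → M₁` twice gives `M₀ → M₁ → X⟦1⟧ → M₀⟦1⟧`, and rigidity kills
`Hom(𝓜, M₀⟦1⟧)`, so `Hom(−, M₀) → Hom(−, M₁) → Hom(−, X⟦1⟧)|𝓜 → 0` is exact: the functor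
lands in `mod 𝓜`, and every `m ⟶ X⟦1⟧` factors through `M₁ → X⟦1⟧`. Hence `d : X ⟶ Y` is
sent to zero iff `d⟦1⟧` factors through `X⟦1⟧ → M₀⟦1⟧`, i.e. iff `d` factors through `M₀`;
and completing morphisms of triangles gives fullness. Conversely, if `A → B` presents
`F ∈ mod 𝓜` and has cone `Z`, then `Z⟦-1⟧ ∈ T⁻¹𝓜 ∗ 𝓜`, and `F` and `Hom(−, Z)|𝓜` are both
the cokernel of `Hom(−, A) → Hom(−, B)`.
-/

open CategoryTheory CategoryTheory.Limits CategoryTheory.Pretriangulated Opposite ZeroObject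

universe v u v' u' v'' u''

/-- `f` factors through an object belonging to `B`. -/
def FactorsThru {A : Type u''} [Category.{v''} A] (B : Set A) {X Y : A} (f : X ⟶ Y) : Prop :=
  ∃ (Z : A) (_ : Z ∈ B) (g : X ⟶ Z) (h : Z ⟶ Y), g ≫ h = f

variable {C : Type u} [Category.{v} C] [Preadditive C] [HasZeroObject C]

/-- The full subcategory on a set of objects. -/
abbrev Subcat (𝓜 : Set C) := ObjectProperty.FullSubcategory (fun X : C => X ∈ 𝓜)

/-- The functor `X ↦ Hom_C(−, X)|_𝓜`, the restricted preadditive Yoneda embedding. -/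
def resYoneda (𝓜 : Set C) : C ⥤ ((Subcat 𝓜)ᵒᵖ ⥤ AddCommGrpCat.{v}) :=
  preadditiveYoneda ⋙
    (Functor.whiskeringLeft _ _ _).obj (ObjectProperty.ι (fun X : C => X ∈ 𝓜)).op

/-- A contravariant additive functor `F` (an `M`-module) is finitely presented if it is
the cokernel of a morphism between representable functors, i.e. there are `A B : M`,
`h : A ⟶ B` and `π : Hom(−,B) ⟶ F` such that
`Hom(−,A) ⟶ Hom(−,B) ⟶ F ⟶ 0` is exact. -/
def FinPres {M : Type u'} [Category.{v'} M] [Preadditive M]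
    (F : Mᵒᵖ ⥤ AddCommGrpCat.{v'}) : Prop :=
  ∃ (A B : M) (h : A ⟶ B) (π : preadditiveYoneda.obj B ⟶ F),
    (∀ m : M, Function.Surjective (π.app (op m))) ∧
    (∀ (m : M) (x : (preadditiveYoneda.obj B).obj (op m)),
      π.app (op m) x = 0 ↔ ∃ y, (preadditiveYoneda.map h).app (op m) y = x)

/-- `mod M`: the category of finitely presented contravariant additive functors
`M → Ab`. -/
abbrev ModCat (M : Type u') [Category.{v'} M] [Preadditive M] :=
  ObjectProperty.FullSubcategory (fun F : Mᵒᵖ ⥤ AddCommGrpCat.{v'} => F.Additive ∧ FinPres F)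

variable [HasShift C ℤ] [∀ n : ℤ, (shiftFunctor C n).Additive] [Pretriangulated C]

variable (𝓜 : Set C)

/-- The subcategory `T⁻¹𝓜 ∗ 𝓜` of objects `X` fitting in a distinguished triangle
`T⁻¹M1 ⟶ X ⟶ M0 ⟶ M1` with `M0, M1 ∈ 𝓜`. -/
def invShiftStar : Set C :=
  {X | ∃ M0 M1 : C, M0 ∈ 𝓜 ∧ M1 ∈ 𝓜 ∧
    ∃ (f : M1⟦(-1 : ℤ)⟧ ⟶ X) (g : X ⟶ M0) (h : M0 ⟶ (M1⟦(-1 : ℤ)⟧)⟦(1 : ℤ)⟧),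
      Triangle.mk f g h ∈ distTriang C}

/-- The hom relation on `T⁻¹𝓜 ∗ 𝓜` identifying morphisms whose difference factors
through an object of `𝓜`; its quotient is `(T⁻¹𝓜 ∗ 𝓜)/𝓜`. -/
def invShiftStarRel : HomRel (Subcat (invShiftStar 𝓜)) :=
  fun {X Y} (f g : X ⟶ Y) =>
    FactorsThru 𝓜 (X := X.obj) (Y := Y.obj) (f.hom - g.hom)

universe w

/-- `FinPres F` unfolds to `∃ A B h π, IsPresentation h π`. -/
def IsPresentation {M : Type*} [Category M] [Preadditive M] {F : Mᵒᵖ ⥤ AddCommGrpCat}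
    {A B : M} (h : A ⟶ B) (π : preadditiveYoneda.obj B ⟶ F) : Prop :=
  (∀ m : M, Function.Surjective (π.app (op m))) ∧
    ∀ (m : M) (x : (preadditiveYoneda.obj B).obj (op m)),
      π.app (op m) x = 0 ↔ ∃ y, (preadditiveYoneda.map h).app (op m) y = x

def IsRigid {A : Type*} [Category A] [HasZeroMorphisms A] [HasShift A ℤ] (𝓐 : Set A) : Prop :=
  ∀ ⦃m m' : A⦄, m ∈ 𝓐 → m' ∈ 𝓐 → ∀ φ : m ⟶ m'⟦(1 : ℤ)⟧, φ = 0

section ResYoneda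

variable {A : Type*} [Category A] [Preadditive A] {𝓐 : Set A}

instance resYoneda_obj_additive (V : A) : ((resYoneda 𝓐).obj V).Additive :=
  inferInstanceAs ((ObjectProperty.ι (fun X : A => X ∈ 𝓐)).op ⋙
    preadditiveYoneda.obj V).Additive

lemma resYoneda_hom_app_comp {V W : A} (φ : (resYoneda 𝓐).obj V ⟶ (resYoneda 𝓐).obj W)
    {m m' : Subcat 𝓐} (β : m'.obj ⟶ m.obj) (ψ : m.obj ⟶ V) :
    φ.app (op m') (β ≫ ψ) = β ≫ (φ.app (op m) ψ : m.obj ⟶ W) :=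
  ConcreteCategory.congr_hom (φ.naturality (ObjectProperty.homMk β).op) ψ

lemma resYoneda_map_eq_iff {V W : A} (a b : V ⟶ W) :
    (resYoneda 𝓐).map a = (resYoneda 𝓐).map b ↔ ∀ m ∈ 𝓐, ∀ ψ : m ⟶ V, ψ ≫ a = ψ ≫ b := by
  constructor
  · intro h m hm ψ
    exact ConcreteCategory.congr_hom (NatTrans.congr_app h (op ⟨m, hm⟩)) ψ
  · intro h
    ext m ψ
    exact h _ m.unop.property ψ

def toResYoneda (B : Subcat 𝓐) {V : A} (w : B.obj ⟶ V) :
    preadditiveYoneda.obj B ⟶ (resYoneda 𝓐).obj V where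
  app m := AddCommGrpCat.ofHom (AddMonoidHom.mk' (fun α => (show m.unop ⟶ B from α).hom ≫ w)
    (fun _ _ => Preadditive.add_comp _ _ _ _ _ _))
  naturality m m' β := by
    ext α
    exact Category.assoc _ _ _

end ResYoneda

section Descent

variable {D : Type*} [Category D] {P F G : D ⥤ AddCommGrpCat.{w}}
  (π : P ⟶ F) (χ : P ⟶ G) (hπ : ∀ d, Function.Surjective (π.app d))
  (hker : ∀ d x, π.app d x = 0 → χ.app d x = 0)

noncomputable def descOfSurjective : F ⟶ G where
  app d := AddCommGrpCat.ofHom <| (π.app d).hom.liftOfSurjective (hπ d)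
    ⟨(χ.app d).hom, fun x hx => hker d x hx⟩
  naturality d d' β := by
    ext x
    obtain ⟨y, rfl⟩ := hπ d x
    simp [← NatTrans.naturality_apply]

@[simp] lemma descOfSurjective_app_apply (d : D) (x : P.obj d) :
    (descOfSurjective π χ hπ hker).app d (π.app d x) = χ.app d x :=
  AddMonoidHom.liftOfRightInverse_comp_apply _ _ _ _ x

lemma isIso_descOfSurjective (hχ : ∀ d, Function.Surjective (χ.app d))
    (hker' : ∀ d x, χ.app d x = 0 → π.app d x = 0) :
    IsIso (descOfSurjective π χ hπ hker) := by
  have (d : D) : IsIso ((descOfSurjective π χ hπ hker).app d) := by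
    rw [ConcreteCategory.isIso_iff_bijective]
    refine ⟨(injective_iff_map_eq_zero _).2 fun x hx => ?_, fun z => ?_⟩
    · obtain ⟨y, rfl⟩ := hπ d x
      exact hker' d y (by rwa [descOfSurjective_app_apply] at hx)
    · obtain ⟨y, rfl⟩ := hχ d z
      exact ⟨π.app d y, descOfSurjective_app_apply π χ hπ hker d y⟩
  exact NatIso.isIso_of_isIso_app _

end Descent

section Triangulated

variable {𝓜}

lemma exists_distTriang_of_mem_invShiftStar {X : C} (hX : X ∈ invShiftStar 𝓜) :
    ∃ (M0 M1 : C) (f : M0 ⟶ M1) (g : M1 ⟶ X⟦(1 : ℤ)⟧) (δ : X⟦(1 : ℤ)⟧ ⟶ M0⟦(1 : ℤ)⟧),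
      M0 ∈ 𝓜 ∧ M1 ∈ 𝓜 ∧ Triangle.mk f g δ ∈ distTriang C := by
  obtain ⟨M0, M1, h0, h1, f, g, h, hT⟩ := hX
  have e : (M1⟦(-1 : ℤ)⟧)⟦(1 : ℤ)⟧ ≅ M1 := (shiftEquiv C (1 : ℤ)).counitIso.app M1
  have hT' : Triangle.mk h (-f⟦(1 : ℤ)⟧') (-g⟦(1 : ℤ)⟧') ∈ distTriang C :=
    rot_of_distTriang _ (rot_of_distTriang _ hT)
  refine ⟨M0, M1, h ≫ e.hom, e.inv ≫ (-f⟦(1 : ℤ)⟧'), -g⟦(1 : ℤ)⟧', h0, h1, ?_⟩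
  exact isomorphic_distinguished _ hT' _
    (Triangle.isoMk _ _ (Iso.refl M0) e.symm (Iso.refl _)
      (by simp [Triangle.mk]) (by simp [Triangle.mk]) (by simp [Triangle.mk]))

lemma shift_neg_one_mem_invShiftStar {A B Z : C} (hA : A ∈ 𝓜) (hB : B ∈ 𝓜) {f : A ⟶ B}
    {g : B ⟶ Z} {δ : Z ⟶ A⟦(1 : ℤ)⟧} (hT : Triangle.mk f g δ ∈ distTriang C) :
    Z⟦(-1 : ℤ)⟧ ∈ invShiftStar 𝓜 :=
  let T := (Triangle.mk f g δ).invRotate.invRotate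
  ⟨A, B, hA, hB, T.mor₁, T.mor₂, T.mor₃, inv_rot_of_distTriang _ (inv_rot_of_distTriang _ hT)⟩

variable (hM : IsRigid 𝓜)
include hM

lemma IsRigid.exists_comp_eq {A B Z m : C} {f : A ⟶ B} {g : B ⟶ Z} {δ : Z ⟶ A⟦(1 : ℤ)⟧}
    (hT : Triangle.mk f g δ ∈ distTriang C) (hA : A ∈ 𝓜) (hm : m ∈ 𝓜) (ψ : m ⟶ Z) :
    ∃ α : m ⟶ B, α ≫ g = ψ := by
  obtain ⟨α, hα⟩ := Triangle.coyoneda_exact₃ _ hT ψ (hM hm hA _)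
  exact ⟨α, hα.symm⟩

lemma IsRigid.isPresentation_toResYoneda {A B : Subcat 𝓜} {Z : C} (f : A ⟶ B) {g : B.obj ⟶ Z}
    {δ : Z ⟶ A.obj⟦(1 : ℤ)⟧} (hT : Triangle.mk f.hom g δ ∈ distTriang C) :
    IsPresentation f (toResYoneda B g) := by
  refine ⟨fun m ψ => ?_, fun m x => ⟨fun hx => ?_, ?_⟩⟩
  · obtain ⟨α, hα⟩ := hM.exists_comp_eq hT A.property m.property ψ
    exact ⟨ObjectProperty.homMk α, hα⟩
  · obtain ⟨y, hy⟩ := Triangle.coyoneda_exact₂ _ hT _ hx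
    exact ⟨ObjectProperty.homMk y, InducedCategory.hom_ext hy.symm⟩
  · rintro ⟨y, rfl⟩
    have hfg : f.hom ≫ g = 0 := comp_distTriang_mor_zero₁₂ _ hT
    change ((y : m ⟶ A).hom ≫ f.hom) ≫ g = 0
    rw [Category.assoc, hfg, comp_zero]

lemma IsRigid.finPres_resYoneda_shift {X : C} (hX : X ∈ invShiftStar 𝓜) :
    FinPres ((resYoneda 𝓜).obj (X⟦(1 : ℤ)⟧)) := by
  obtain ⟨M0, M1, f, g, δ, h0, h1, hT⟩ := exists_distTriang_of_mem_invShiftStar hX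
  let f' : (⟨M0, h0⟩ : Subcat 𝓜) ⟶ ⟨M1, h1⟩ := ObjectProperty.homMk f
  exact ⟨_, _, f', _, hM.isPresentation_toResYoneda f' hT⟩

noncomputable def IsRigid.shiftResYoneda : Subcat (invShiftStar 𝓜) ⥤ ModCat (Subcat 𝓜) :=
  ObjectProperty.lift _ (ObjectProperty.ι _ ⋙ shiftFunctor C (1 : ℤ) ⋙ resYoneda 𝓜)
    fun X => ⟨resYoneda_obj_additive _, hM.finPres_resYoneda_shift X.property⟩

lemma IsRigid.factorsThru_iff {X Y : C} (hX : X ∈ invShiftStar 𝓜) (d : X ⟶ Y) :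
    FactorsThru 𝓜 d ↔ ∀ m ∈ 𝓜, ∀ ψ : m ⟶ X⟦(1 : ℤ)⟧, ψ ≫ d⟦(1 : ℤ)⟧' = 0 := by
  constructor
  · rintro ⟨Z, hZ, a, b, rfl⟩ m hm ψ
    rw [Functor.map_comp, ← Category.assoc, hM hm hZ (ψ ≫ a⟦(1 : ℤ)⟧'), zero_comp]
  · intro hd
    obtain ⟨M0, M1, f, g, δ, h0, h1, hT⟩ := exists_distTriang_of_mem_invShiftStar hX
    obtain ⟨k, hk⟩ : ∃ k : M0⟦(1 : ℤ)⟧ ⟶ Y⟦(1 : ℤ)⟧, d⟦(1 : ℤ)⟧' = δ ≫ k :=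
      Triangle.yoneda_exact₃ _ hT (d⟦(1 : ℤ)⟧') (hd M1 h1 g)
    refine ⟨M0, h0, (shiftFunctor C (1 : ℤ)).preimage δ, (shiftFunctor C (1 : ℤ)).preimage k,
      (shiftFunctor C (1 : ℤ)).map_injective ?_⟩
    simp [hk]

lemma IsRigid.invShiftStarRel_eq_homRel : invShiftStarRel 𝓜 = hM.shiftResYoneda.homRel := by
  funext X Y f g
  have hG : hM.shiftResYoneda.homRel f g ↔
      (resYoneda 𝓜).map (f.hom⟦(1 : ℤ)⟧') = (resYoneda 𝓜).map (g.hom⟦(1 : ℤ)⟧') :=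
    InducedCategory.Hom.ext_iff
  rw [hG, resYoneda_map_eq_iff, invShiftStarRel, hM.factorsThru_iff X.property]
  simp only [Functor.map_sub, Preadditive.comp_sub, sub_eq_zero]

instance IsRigid.full_shiftResYoneda : hM.shiftResYoneda.Full where
  map_surjective {X Y} φ := by
    -- `g` generates `Hom(−, X⟦1⟧)|𝓜`, so `φ` is determined by `φ g`; realise `φ g` by a
    -- morphism of triangles.
    obtain ⟨M0, M1, f, g, δ, h0, h1, hTX⟩ := exists_distTriang_of_mem_invShiftStar X.property
    obtain ⟨N0, N1, f', g', δ', k0, k1, hTY⟩ := exists_distTriang_of_mem_invShiftStar Y.property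
    let φ' : (resYoneda 𝓜).obj (X.obj⟦(1 : ℤ)⟧) ⟶ (resYoneda 𝓜).obj (Y.obj⟦(1 : ℤ)⟧) := φ.hom
    obtain ⟨u, hu⟩ := hM.exists_comp_eq hTY k0 h1 (φ'.app (op ⟨M1, h1⟩) g)
    have hfu : (f ≫ u) ≫ g' = 0 := by
      have hfg : f ≫ g = 0 := comp_distTriang_mor_zero₁₂ _ hTX
      have hnat := resYoneda_hom_app_comp φ' (m := ⟨M1, h1⟩) (m' := ⟨M0, h0⟩) f g
      rw [hfg] at hnat
      rw [Category.assoc, hu, ← hnat]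
      exact map_zero _
    obtain ⟨v, hv⟩ : ∃ v : M0 ⟶ N0, f ≫ u = v ≫ f' := Triangle.coyoneda_exact₂ _ hTY (f ≫ u) hfu
    obtain ⟨w, hw, -⟩ : ∃ w : X.obj⟦(1 : ℤ)⟧ ⟶ Y.obj⟦(1 : ℤ)⟧,
        g ≫ w = u ≫ g' ∧ δ ≫ v⟦(1 : ℤ)⟧' = w ≫ δ' :=
      complete_distinguished_triangle_morphism _ _ hTX hTY v u hv
    refine ⟨ObjectProperty.homMk ((shiftFunctor C (1 : ℤ)).preimage w), InducedCategory.hom_ext ?_⟩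
    ext m ψ
    obtain ⟨α, rfl⟩ := hM.exists_comp_eq hTX h0 m.unop.property ψ
    change (α ≫ g) ≫ (shiftFunctor C (1 : ℤ)).map ((shiftFunctor C (1 : ℤ)).preimage w) =
      φ'.app m (α ≫ g)
    rw [Functor.map_preimage, Category.assoc, hw, hu]
    exact (resYoneda_hom_app_comp φ' (m := ⟨M1, h1⟩) α g).symm

instance IsRigid.essSurj_shiftResYoneda : hM.shiftResYoneda.EssSurj where
  mem_essImage F := by
    obtain ⟨A, B, f, π, hπ, hπ_ker⟩ := F.property.2
    obtain ⟨Z, g, δ, hT⟩ := distinguished_cocone_triangle f.hom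
    obtain ⟨hχ, hχ_ker⟩ := hM.isPresentation_toResYoneda f hT
    let Φ := descOfSurjective π (toResYoneda B g) (fun m => hπ m.unop)
      (fun m x hx => (hχ_ker m.unop x).2 ((hπ_ker m.unop x).1 hx))
    have : IsIso Φ := isIso_descOfSurjective _ _ _ _ (fun m => hχ m.unop)
      (fun m x hx => (hπ_ker m.unop x).2 ((hχ_ker m.unop x).1 hx))
    exact ⟨⟨Z⟦(-1 : ℤ)⟧, shift_neg_one_mem_invShiftStar A.property B.property hT⟩,
      ⟨ObjectProperty.isoMk _ ((resYoneda 𝓜).mapIso ((shiftEquiv C (1 : ℤ)).counitIso.app Z) ≪≫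
        (asIso Φ).symm)⟩⟩

end Triangulated

theorem stmt15
    (rigid : ∀ ⦃m m' : C⦄, m ∈ 𝓜 → m' ∈ 𝓜 → ∀ φ : m ⟶ m'⟦(1 : ℤ)⟧, φ = 0) :
    Nonempty (CategoryTheory.Quotient (invShiftStarRel 𝓜) ≌ ModCat (Subcat 𝓜)) := by
  have hM : IsRigid 𝓜 := rigid
  rw [hM.invShiftStarRel_eq_homRel]
  exact ⟨(CategoryTheory.Quotient.lift hM.shiftResYoneda.homRel hM.shiftResYoneda
    fun _ _ _ _ h => h).asEquivalence⟩
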